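/- Suppose Ω_- and Ω_+ have opposite real parts (Re Ω_- = -Re Ω_+), the scattering matrix S is real, and the coupling matrices C_-, C_+ are purely imaginary. Then for every s ∈ ℂ such that s·I_{2n} - A is invertible, the quadrature transfer function is block lower triangular: G_qp[s] = 0, i.e., a BAE measurement of q_out with respect to p_in is realized. -/
import Mathlib


open Matrix Complex

noncomputable section

/-- Entrywise real part of a complex matrix, viewed as a complex matrix. -/
def reM {α β : Type*} (M : Matrix α β ℂ) : Matrix α β ℂ :=
  M.map fun z => (z.re : ℂ)

/-- Entrywise imaginary part of a complex matrix, viewed as a complex matrix. -/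
def imM {α β : Type*} (M : Matrix α β ℂ) : Matrix α β ℂ :=
  M.map fun z => (z.im : ℂ)

/-- The quadrature scattering matrix `D = [[Re S, -Im S],[Im S, Re S]]`. -/
def QD {m : ℕ} (S : Matrix (Fin m) (Fin m) ℂ) :
    Matrix (Fin m ⊕ Fin m) (Fin m ⊕ Fin m) ℂ :=
  fromBlocks (reM S) (-(imM S)) (imM S) (reM S)

/-- The quadrature coupling matrix
`C = [[Re(C₋+C₊), -Im(C₋-C₊)],[Im(C₋+C₊), Re(C₋-C₊)]]`. -/
def QC {m n : ℕ} (Cm Cp : Matrix (Fin m) (Fin n) ℂ) :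
    Matrix (Fin m ⊕ Fin m) (Fin n ⊕ Fin n) ℂ :=
  fromBlocks (reM (Cm + Cp)) (-(imM (Cm - Cp))) (imM (Cm + Cp)) (reM (Cm - Cp))

/-- The quadrature input matrix
`B = -[[Re(C₋†-C₊†), -Im(C₋†-C₊†)],[Im(C₋†+C₊†), Re(C₋†+C₊†)]] · D`. -/
def QB {m n : ℕ} (Cm Cp : Matrix (Fin m) (Fin n) ℂ) (S : Matrix (Fin m) (Fin m) ℂ) :
    Matrix (Fin n ⊕ Fin n) (Fin m ⊕ Fin m) ℂ :=
  -(fromBlocks (reM (Cmᴴ - Cpᴴ)) (-(imM (Cmᴴ - Cpᴴ)))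
      (imM (Cmᴴ + Cpᴴ)) (reM (Cmᴴ + Cpᴴ)) * QD S)

/-- `JH = [[Im(Ω₋+Ω₊), Re(Ω₋-Ω₊)],[-Re(Ω₋+Ω₊), Im(Ω₋-Ω₊)]]`. -/
def QJH {n : ℕ} (Om Op : Matrix (Fin n) (Fin n) ℂ) :
    Matrix (Fin n ⊕ Fin n) (Fin n ⊕ Fin n) ℂ :=
  fromBlocks (imM (Om + Op)) (reM (Om - Op)) (-(reM (Om + Op))) (imM (Om - Op))

/-- `𝕁ₖ = [[0, Iₖ],[-Iₖ, 0]]`. -/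
def QJ (k : ℕ) : Matrix (Fin k ⊕ Fin k) (Fin k ⊕ Fin k) ℂ :=
  fromBlocks 0 1 (-1) 0

/-- `C♯ = -𝕁ₙ · C† · 𝕁ₘ`. -/
def QCsharp {m n : ℕ} (Cm Cp : Matrix (Fin m) (Fin n) ℂ) :
    Matrix (Fin n ⊕ Fin n) (Fin m ⊕ Fin m) ℂ :=
  -(QJ n * (QC Cm Cp)ᴴ * QJ m)

/-- `A = JH - (1/2) · C♯ · C`. -/
def QA {m n : ℕ} (Cm Cp : Matrix (Fin m) (Fin n) ℂ) (Om Op : Matrix (Fin n) (Fin n) ℂ) :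
    Matrix (Fin n ⊕ Fin n) (Fin n ⊕ Fin n) ℂ :=
  QJH Om Op - (1/2 : ℂ) • (QCsharp Cm Cp * QC Cm Cp)

/-- The quadrature transfer function `G[s] = D + C (sI - A)⁻¹ B`. -/
def QG {m n : ℕ} (Cm Cp : Matrix (Fin m) (Fin n) ℂ) (Om Op : Matrix (Fin n) (Fin n) ℂ)
    (S : Matrix (Fin m) (Fin m) ℂ) (s : ℂ) :
    Matrix (Fin m ⊕ Fin m) (Fin m ⊕ Fin m) ℂ :=
  QD S + QC Cm Cp *
    (s • (1 : Matrix (Fin n ⊕ Fin n) (Fin n ⊕ Fin n) ℂ) - QA Cm Cp Om Op)⁻¹ * QB Cm Cp S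

section Aux

variable {R : Type*} {α β γ δ ε ζ : Type*}

lemma reM_add (A B : Matrix α β ℂ) : reM (A + B) = reM A + reM B := by
  ext i j; simp [reM, Matrix.add_apply]

lemma reM_sub (A B : Matrix α β ℂ) : reM (A - B) = reM A - reM B := by
  ext i j; simp [reM, Matrix.sub_apply]

lemma reM_conjTranspose (A : Matrix α β ℂ) : reM Aᴴ = (reM A)ᵀ := by
  ext i j; simp [reM, Matrix.conjTranspose_apply, Matrix.transpose_apply]

section Blocks
variable [Fintype γ] [Fintype δ] [NonUnitalNonAssocSemiring R]

lemma toBlocks₁₁_mul (M : Matrix (α ⊕ β) (γ ⊕ δ) R) (N : Matrix (γ ⊕ δ) (ε ⊕ ζ) R) :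
    (M * N).toBlocks₁₁ = M.toBlocks₁₁ * N.toBlocks₁₁ + M.toBlocks₁₂ * N.toBlocks₂₁ := by
  ext i j
  simp [Matrix.toBlocks₁₁, Matrix.toBlocks₁₂, Matrix.toBlocks₂₁, Matrix.mul_apply,
    Fintype.sum_sum_type]

lemma toBlocks₁₂_mul (M : Matrix (α ⊕ β) (γ ⊕ δ) R) (N : Matrix (γ ⊕ δ) (ε ⊕ ζ) R) :
    (M * N).toBlocks₁₂ = M.toBlocks₁₁ * N.toBlocks₁₂ + M.toBlocks₁₂ * N.toBlocks₂₂ := by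
  ext i j
  simp [Matrix.toBlocks₁₁, Matrix.toBlocks₁₂, Matrix.toBlocks₂₂, Matrix.mul_apply,
    Fintype.sum_sum_type]

lemma toBlocks₂₁_mul (M : Matrix (α ⊕ β) (γ ⊕ δ) R) (N : Matrix (γ ⊕ δ) (ε ⊕ ζ) R) :
    (M * N).toBlocks₂₁ = M.toBlocks₂₁ * N.toBlocks₁₁ + M.toBlocks₂₂ * N.toBlocks₂₁ := by
  ext i j
  simp [Matrix.toBlocks₂₁, Matrix.toBlocks₂₂, Matrix.toBlocks₁₁, Matrix.mul_apply,
    Fintype.sum_sum_type]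

lemma toBlocks₂₂_mul (M : Matrix (α ⊕ β) (γ ⊕ δ) R) (N : Matrix (γ ⊕ δ) (ε ⊕ ζ) R) :
    (M * N).toBlocks₂₂ = M.toBlocks₂₁ * N.toBlocks₁₂ + M.toBlocks₂₂ * N.toBlocks₂₂ := by
  ext i j
  simp [Matrix.toBlocks₂₁, Matrix.toBlocks₂₂, Matrix.toBlocks₁₂, Matrix.mul_apply,
    Fintype.sum_sum_type]

end Blocks

section Blocks2
variable [AddGroup R]

lemma toBlocks₂₁_sub (M N : Matrix (α ⊕ β) (γ ⊕ δ) R) :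
    (M - N).toBlocks₂₁ = M.toBlocks₂₁ - N.toBlocks₂₁ := by
  ext i j; simp [Matrix.toBlocks₂₁, Matrix.sub_apply]

lemma toBlocks₁₂_add (M N : Matrix (α ⊕ β) (γ ⊕ δ) R) :
    (M + N).toBlocks₁₂ = M.toBlocks₁₂ + N.toBlocks₁₂ := by
  ext i j; simp [Matrix.toBlocks₁₂, Matrix.add_apply]

lemma toBlocks₂₂_neg (M : Matrix (α ⊕ β) (γ ⊕ δ) R) :
    (-M).toBlocks₂₂ = -(M.toBlocks₂₂) := by
  ext i j; simp [Matrix.toBlocks₂₂]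

end Blocks2

lemma toBlocks₂₁_smul [Monoid R] {S : Type*} [AddMonoid S] [DistribMulAction R S]
    (c : R) (M : Matrix (α ⊕ β) (γ ⊕ δ) S) :
    (c • M).toBlocks₂₁ = c • M.toBlocks₂₁ := by
  ext i j; simp [Matrix.toBlocks₂₁]

lemma toBlocks₂₁_one [DecidableEq α] [DecidableEq β] [Zero R] [One R] :
    (1 : Matrix (α ⊕ β) (α ⊕ β) R).toBlocks₂₁ = 0 := by
  ext i j; simp [Matrix.toBlocks₂₁, Matrix.one_apply]

lemma toBlocks₁₁_conjTranspose [Star R] (M : Matrix (α ⊕ β) (γ ⊕ δ) R) :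
    (Mᴴ).toBlocks₁₁ = (M.toBlocks₁₁)ᴴ := by
  ext i j; simp [Matrix.toBlocks₁₁, Matrix.conjTranspose_apply]

/-- If a block matrix with invertible determinant has zero lower-left block, so does its
inverse. -/
lemma inv_toBlocks₂₁_eq_zero {α β : Type*} [Fintype α] [Fintype β]
    [DecidableEq α] [DecidableEq β]
    (M : Matrix (α ⊕ β) (α ⊕ β) ℂ) (hM : IsUnit M) (h21 : M.toBlocks₂₁ = 0) :
    (M⁻¹).toBlocks₂₁ = 0 := by
  have hdet : IsUnit M.det := (Matrix.isUnit_iff_isUnit_det M).mp hM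
  have hMf : M = fromBlocks M.toBlocks₁₁ M.toBlocks₁₂ 0 M.toBlocks₂₂ := by
    rw [← h21, Matrix.fromBlocks_toBlocks]
  have hdet2 : M.det = M.toBlocks₁₁.det * M.toBlocks₂₂.det := by
    conv_lhs => rw [hMf]
    exact Matrix.det_fromBlocks_zero₂₁ _ _ _
  have hd1 : IsUnit M.toBlocks₁₁.det := by
    rw [hdet2] at hdet
    exact isUnit_of_mul_isUnit_left hdet
  have hinv : M⁻¹ * M = 1 := Matrix.nonsing_inv_mul M hdet
  have h' : (M⁻¹ * M).toBlocks₂₁ = 0 := by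
    rw [hinv]; exact toBlocks₂₁_one
  rw [toBlocks₂₁_mul, h21, Matrix.mul_zero, add_zero] at h'
  calc (M⁻¹).toBlocks₂₁
      = (M⁻¹).toBlocks₂₁ * (M.toBlocks₁₁ * M.toBlocks₁₁⁻¹) := by
        rw [Matrix.mul_nonsing_inv _ hd1, Matrix.mul_one]
    _ = ((M⁻¹).toBlocks₂₁ * M.toBlocks₁₁) * M.toBlocks₁₁⁻¹ := by rw [Matrix.mul_assoc]
    _ = 0 := by rw [h', Matrix.zero_mul]

end Aux

/-- Re Ω₋ = -Re Ω₊, S real, C₋, C₊ purely imaginary ⟹ G_qp[s] = 0. -/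
theorem stmt8 {m n : ℕ} (Cm Cp : Matrix (Fin m) (Fin n) ℂ)
    (Om Op : Matrix (Fin n) (Fin n) ℂ)
    (S : Matrix (Fin m) (Fin m) ℂ)
    (hOmHerm : Omᴴ = Om) (hOpSymm : Opᵀ = Op)
    (hRe : reM Om = -(reM Op)) (hS : imM S = 0) (hCm : reM Cm = 0) (hCp : reM Cp = 0)
    (s : ℂ)
    (hs : IsUnit (s • (1 : Matrix (Fin n ⊕ Fin n) (Fin n ⊕ Fin n) ℂ) - QA Cm Cp Om Op)) :
    (QG Cm Cp Om Op S s).toBlocks₁₂ = 0 := by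
  set M : Matrix (Fin n ⊕ Fin n) (Fin n ⊕ Fin n) ℂ :=
    s • (1 : Matrix (Fin n ⊕ Fin n) (Fin n ⊕ Fin n) ℂ) - QA Cm Cp Om Op with hMdef
  -- basic real-part facts
  have h1 : reM (Cm + Cp) = 0 := by rw [reM_add, hCm, hCp, add_zero]
  have h4 : reM (Cmᴴ + Cpᴴ) = 0 := by
    rw [reM_add, reM_conjTranspose, reM_conjTranspose, hCm, hCp]
    simp
  have h5 : reM (Om + Op) = 0 := by rw [reM_add, hRe, neg_add_cancel]
  -- block structure facts
  have hQC11 : (QC Cm Cp).toBlocks₁₁ = 0 := by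
    rw [QC, Matrix.toBlocks_fromBlocks₁₁, h1]
  have hCs22 : (QCsharp Cm Cp).toBlocks₂₂ = 0 := by
    rw [QCsharp, toBlocks₂₂_neg, toBlocks₂₂_mul, toBlocks₂₁_mul,
      toBlocks₁₁_conjTranspose, hQC11]
    simp [QJ]
  have hJH21 : (QJH Om Op).toBlocks₂₁ = 0 := by
    rw [QJH, Matrix.toBlocks_fromBlocks₂₁, h5, neg_zero]
  have hA21 : (QA Cm Cp Om Op).toBlocks₂₁ = 0 := by
    rw [QA, toBlocks₂₁_sub, hJH21, toBlocks₂₁_smul, toBlocks₂₁_mul, hQC11, hCs22]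
    simp
  have hM21 : M.toBlocks₂₁ = 0 := by
    rw [hMdef, toBlocks₂₁_sub, toBlocks₂₁_smul, toBlocks₂₁_one, hA21]
    simp
  have hinv21 : (M⁻¹).toBlocks₂₁ = 0 := inv_toBlocks₂₁_eq_zero M hs hM21
  have hB22 : (QB Cm Cp S).toBlocks₂₂ = 0 := by
    rw [QB, toBlocks₂₂_neg, toBlocks₂₂_mul]
    have hF22 : (fromBlocks (reM (Cmᴴ - Cpᴴ)) (-(imM (Cmᴴ - Cpᴴ)))
        (imM (Cmᴴ + Cpᴴ)) (reM (Cmᴴ + Cpᴴ))).toBlocks₂₂ = 0 := by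
      rw [Matrix.toBlocks_fromBlocks₂₂, h4]
    have hD12 : (QD S).toBlocks₁₂ = 0 := by
      rw [QD, Matrix.toBlocks_fromBlocks₁₂, hS, neg_zero]
    rw [hF22, hD12]
    simp
  have hD12 : (QD S).toBlocks₁₂ = 0 := by
    rw [QD, Matrix.toBlocks_fromBlocks₁₂, hS, neg_zero]
  rw [QG, toBlocks₁₂_add, hD12, toBlocks₁₂_mul, toBlocks₁₁_mul, ← hMdef,
    hQC11, hinv21, hB22]
  simp
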